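/- For all f, g ∈ dom t_α the limit lim_{k→∞} ∫_{−k}^{k} f·conj(g)·r dx exists. -/

import Mathlib

open MeasureTheory Filter

/-- `η_α(x) := (√(|x|^α+1) − √(|x|^α))·|r(x)|`. -/
noncomputable def eta (α : ℝ) (r : ℝ → ℝ) (x : ℝ) : ℝ :=
  (Real.sqrt (|x| ^ α + 1) - Real.sqrt (|x| ^ α)) * |r x|

/-- `ω_α(x) := √(|x|^α)·|r(x)|`. -/
noncomputable def omegaW (α : ℝ) (r : ℝ → ℝ) (x : ℝ) : ℝ :=
  Real.sqrt (|x| ^ α) * |r x|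

/-- `r₊(x) := x·r(x)`. -/
def rplus (r : ℝ → ℝ) (x : ℝ) : ℝ := x * r x

/-- `r₋(x) := r(x)/x` (with junk value `0` at `x = 0`, where `r` vanishes anyway). -/
noncomputable def rminus (r : ℝ → ℝ) (x : ℝ) : ℝ := r x / x

/-- Membership in the weighted space `L²(w)`. -/
def MemL2W (w : ℝ → ℝ) (f : ℝ → ℂ) : Prop :=
  Integrable (fun x => ‖f x‖ ^ 2 * w x)

/-- Even part of a function. -/
noncomputable def evenPart (f : ℝ → ℂ) (x : ℝ) : ℂ := (f x + f (-x)) / 2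

/-- Odd part of a function. -/
noncomputable def oddPart (f : ℝ → ℂ) (x : ℝ) : ℂ := (f x - f (-x)) / 2

/-- `dom t_α = {f ∈ L²(r₋) : f_e ∈ L²(η_α), f_o ∈ L²(ω_α)}`. -/
noncomputable def DomT (α : ℝ) (r : ℝ → ℝ) (f : ℝ → ℂ) : Prop :=
  MemL2W (rminus r) f ∧ MemL2W (eta α r) (evenPart f) ∧ MemL2W (omegaW α r) (oddPart f)

/-- The squared norm `t_α(f,f) = 2‖f_o‖²_{ω_α} + ‖f‖²_{η_α}`. -/
noncomputable def Qform (α : ℝ) (r : ℝ → ℝ) (f : ℝ → ℂ) : ℝ :=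
  2 * (∫ x, ‖oddPart f x‖ ^ 2 * omegaW α r x) + ∫ x, ‖f x‖ ^ 2 * eta α r x

/-!
Split `f = f_e + f_o` and `g = g_e + g_o`. Since `r` is odd, the diagonal terms
`f_e·conj(g_e)·r` and `f_o·conj(g_o)·r` are odd and integrate to zero over `[-k, k]`, where
they are integrable because `η_α` and `ω_α` dominate a multiple of `|r|` on bounded sets.
The cross terms are integrable on all of `ℝ`: from `|r| = (√(|x|^α+1) + √(|x|^α))·η_α` one
gets `r² ≤ C·η_α·ω_α` (as `r` vanishes for `|x| ≤ ε`), and then AM–GM bounds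
`|f_e|·|g_o|·|r|` by `|f_e|²η_α` and `|g_o|²ω_α`. So the truncated integrals are truncated
integrals of a fixed integrable function, and they converge to its integral.
-/

open Set ComplexConjugate

lemma two_mul_mul_abs_le_of_sq_le {A B ρ w₁ w₂ c : ℝ} (hc : 0 ≤ c) (hw₁ : 0 ≤ w₁) (hw₂ : 0 ≤ w₂)
    (hρ : ρ ^ 2 ≤ c * (w₁ * w₂)) :
    2 * (A * B * |ρ|) ≤ c * (A ^ 2 * w₁) + B ^ 2 * w₂ := by
  have hP : 0 ≤ c * (A ^ 2 * w₁) := by positivity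
  have hQ : 0 ≤ B ^ 2 * w₂ := by positivity
  refine abs_le_of_sq_le_sq' ?_ (add_nonneg hP hQ) |>.2
  calc (2 * (A * B * |ρ|)) ^ 2 = 4 * (A ^ 2 * B ^ 2) * ρ ^ 2 := by rw [← sq_abs ρ]; ring
    _ ≤ 4 * (A ^ 2 * B ^ 2) * (c * (w₁ * w₂)) := by gcongr
    _ = 4 * (c * (A ^ 2 * w₁)) * (B ^ 2 * w₂) := by ring
    _ ≤ (c * (A ^ 2 * w₁) + B ^ 2 * w₂) ^ 2 := by
      nlinarith [sq_nonneg (c * (A ^ 2 * w₁) - B ^ 2 * w₂)]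

lemma integrable_mul_conj_mul_of_sq_le {X : Type*} [MeasurableSpace X] {μ : Measure X}
    {a b : X → ℂ} {ρ w₁ w₂ : X → ℝ} {c : ℝ} (hc : 0 ≤ c)
    (hw₁ : ∀ x, 0 ≤ w₁ x) (hw₂ : ∀ x, 0 ≤ w₂ x) (ha : AEStronglyMeasurable a μ)
    (hb : AEStronglyMeasurable b μ) (hρ : AEStronglyMeasurable ρ μ)
    (ha₂ : Integrable (fun x => ‖a x‖ ^ 2 * w₁ x) μ)
    (hb₂ : Integrable (fun x => ‖b x‖ ^ 2 * w₂ x) μ)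
    (hρw : ∀ᵐ x ∂μ, ρ x ^ 2 ≤ c * (w₁ x * w₂ x)) :
    Integrable (fun x => a x * conj (b x) * (ρ x : ℂ)) μ := by
  refine Integrable.mono' (((ha₂.const_mul c).add hb₂).div_const 2)
    ((ha.mul (Complex.continuous_conj.comp_aestronglyMeasurable hb)).mul
      (Complex.continuous_ofReal.comp_aestronglyMeasurable hρ)) ?_
  filter_upwards [hρw] with x hx
  rw [norm_mul, norm_mul, Complex.norm_conj, Complex.norm_real, Real.norm_eq_abs]
  have := two_mul_mul_abs_le_of_sq_le (A := ‖a x‖) (B := ‖b x‖) hc (hw₁ x) (hw₂ x) hx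
  simp only [Pi.add_apply]
  linarith

lemma setIntegral_Icc_neg_eq_zero_of_odd {E : Type*} [NormedAddCommGroup E] [NormedSpace ℝ E]
    {D : ℝ → E} (hD : ∀ x, D (-x) = -D x) (a : ℝ) : ∫ x in Icc (-a) a, D x = 0 := by
  have hneg : MeasurableEmbedding fun x : ℝ => -x := (Homeomorph.neg ℝ).measurableEmbedding
  have h := hneg.setIntegral_map (μ := volume) D (Icc (-a) a)
  rw [Measure.map_neg_eq_self, neg_preimage, neg_Icc, neg_neg] at h
  simp only [hD, integral_neg] at h
  have h2 : (2 : ℝ) • ∫ x in Icc (-a) a, D x = 0 := by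
    rw [two_smul]
    nth_rewrite 2 [h]
    exact add_neg_cancel _
  simpa using h2


section Weights

variable {α ε : ℝ} {r : ℝ → ℝ}

lemma eta_nonneg (α : ℝ) (r : ℝ → ℝ) (x : ℝ) : 0 ≤ eta α r x :=
  mul_nonneg (sub_nonneg.2 (Real.sqrt_le_sqrt (le_add_of_nonneg_right zero_le_one)))
    (abs_nonneg _)

lemma omegaW_nonneg (α : ℝ) (r : ℝ → ℝ) (x : ℝ) : 0 ≤ omegaW α r x :=
  mul_nonneg (Real.sqrt_nonneg _) (abs_nonneg _)

lemma abs_eq_mul_eta (α : ℝ) (r : ℝ → ℝ) (x : ℝ) :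
    |r x| = (√(|x| ^ α + 1) + √(|x| ^ α)) * eta α r x := by
  have hs : 0 ≤ |x| ^ α := Real.rpow_nonneg (abs_nonneg x) α
  have hprod : (√(|x| ^ α + 1) + √(|x| ^ α)) * (√(|x| ^ α + 1) - √(|x| ^ α)) = 1 := by
    rw [← sq_sub_sq, Real.sq_sqrt (by linarith), Real.sq_sqrt hs]
    ring
  rw [eta, ← mul_assoc, hprod, one_mul]

lemma sqrt_rpow_le_sqrt_rpow_abs (hα : 0 ≤ α) (hε : 0 ≤ ε) (hr0 : ∀ x, |x| ≤ ε → r x = 0)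
    {x : ℝ} (hx : r x ≠ 0) : √(ε ^ α) ≤ √(|x| ^ α) :=
  Real.sqrt_le_sqrt <| Real.rpow_le_rpow hε (le_of_not_ge fun h => hx (hr0 x h)) hα

lemma sq_le_mul_eta_mul_omegaW (hα : 0 ≤ α) (hε : 0 < ε) (hr0 : ∀ x, |x| ≤ ε → r x = 0)
    (x : ℝ) : r x ^ 2 ≤ (2 + (√(ε ^ α))⁻¹) * (eta α r x * omegaW α r x) := by
  rcases eq_or_ne (r x) 0 with hx | hx
  · simp [eta, omegaW, hx]
  set t := √(|x| ^ α)
  have ht₀ : 0 < √(ε ^ α) := Real.sqrt_pos.2 (Real.rpow_pos_of_pos hε α)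
  have hle : √(ε ^ α) ≤ t := sqrt_rpow_le_sqrt_rpow_abs hα hε.le hr0 hx
  have hu : √(|x| ^ α + 1) ≤ t + 1 := by
    rw [Real.sqrt_le_iff]
    refine ⟨by positivity, ?_⟩
    nlinarith [Real.sq_sqrt (Real.rpow_nonneg (abs_nonneg x) α), Real.sqrt_nonneg (|x| ^ α)]
  have hone : 1 ≤ (√(ε ^ α))⁻¹ * t := by rwa [le_inv_mul_iff₀ ht₀, mul_one]
  calc r x ^ 2 = (√(|x| ^ α + 1) + t) * eta α r x * |r x| := by
        rw [← abs_eq_mul_eta, ← sq_abs, sq]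
    _ ≤ (2 + (√(ε ^ α))⁻¹) * t * eta α r x * |r x| := by
        gcongr
        · exact eta_nonneg α r x
        · linarith
    _ = (2 + (√(ε ^ α))⁻¹) * (eta α r x * omegaW α r x) := by rw [omegaW]; ring

lemma sq_le_mul_omegaW_mul_omegaW (hα : 0 ≤ α) (hε : 0 < ε) (hr0 : ∀ x, |x| ≤ ε → r x = 0)
    (x : ℝ) : r x ^ 2 ≤ (√(ε ^ α))⁻¹ ^ 2 * (omegaW α r x * omegaW α r x) := by
  rcases eq_or_ne (r x) 0 with hx | hx
  · simp [omegaW, hx]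
  have ht₀ : 0 < √(ε ^ α) := Real.sqrt_pos.2 (Real.rpow_pos_of_pos hε α)
  have hone : 1 ≤ (√(ε ^ α))⁻¹ * √(|x| ^ α) := by
    rw [le_inv_mul_iff₀ ht₀, mul_one]
    exact sqrt_rpow_le_sqrt_rpow_abs hα hε.le hr0 hx
  calc r x ^ 2 = (1 * |r x|) ^ 2 := by rw [one_mul, sq_abs]
    _ ≤ ((√(ε ^ α))⁻¹ * √(|x| ^ α) * |r x|) ^ 2 := by gcongr
    _ = (√(ε ^ α))⁻¹ ^ 2 * (omegaW α r x * omegaW α r x) := by rw [omegaW]; ring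

lemma sq_le_mul_eta_mul_eta (hα : 0 ≤ α) {k x : ℝ} (hx : |x| ≤ k) :
    r x ^ 2 ≤ 4 * (k ^ α + 1) * (eta α r x * eta α r x) := by
  have hs : 0 ≤ |x| ^ α := Real.rpow_nonneg (abs_nonneg x) α
  calc r x ^ 2 = (√(|x| ^ α + 1) + √(|x| ^ α)) ^ 2 * (eta α r x * eta α r x) := by
        rw [← sq_abs, abs_eq_mul_eta]; ring
    _ ≤ (2 * √(|x| ^ α + 1)) ^ 2 * (eta α r x * eta α r x) := by
        gcongr
        · exact mul_self_nonneg _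
        · linarith [Real.sqrt_le_sqrt (le_add_of_nonneg_right zero_le_one : |x| ^ α ≤ |x| ^ α + 1)]
    _ = 4 * (|x| ^ α + 1) * (eta α r x * eta α r x) := by
        rw [mul_pow, Real.sq_sqrt (by linarith)]; ring
    _ ≤ 4 * (k ^ α + 1) * (eta α r x * eta α r x) := by
        gcongr
        exact mul_self_nonneg _

end Weights

lemma evenPart_add_oddPart (f : ℝ → ℂ) (x : ℝ) : evenPart f x + oddPart f x = f x := by
  simp only [evenPart, oddPart]
  ring

lemma evenPart_neg (f : ℝ → ℂ) (x : ℝ) : evenPart f (-x) = evenPart f x := by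
  simp only [evenPart, neg_neg]
  ring

lemma oddPart_neg (f : ℝ → ℂ) (x : ℝ) : oddPart f (-x) = -oddPart f x := by
  simp only [oddPart, neg_neg]
  ring

lemma Measurable.evenPart {f : ℝ → ℂ} (hf : Measurable f) : Measurable (evenPart f) :=
  (hf.add (hf.comp measurable_neg)).div_const 2

lemma Measurable.oddPart {f : ℝ → ℂ} (hf : Measurable f) : Measurable (oddPart f) :=
  (hf.sub (hf.comp measurable_neg)).div_const 2

section Integrability

variable {α ε : ℝ} {r : ℝ → ℝ} {a b : ℝ → ℂ}

lemma integrable_mul_conj_mul_of_memL2W_eta_omegaW (hα : 0 ≤ α) (hε : 0 < ε)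
    (hr0 : ∀ x, |x| ≤ ε → r x = 0) (hrm : Measurable r) (ha : Measurable a) (hb : Measurable b)
    (ha₂ : MemL2W (eta α r) a) (hb₂ : MemL2W (omegaW α r) b) :
    Integrable fun x => a x * conj (b x) * (r x : ℂ) :=
  integrable_mul_conj_mul_of_sq_le (by positivity) (eta_nonneg α r) (omegaW_nonneg α r)
    ha.aestronglyMeasurable hb.aestronglyMeasurable hrm.aestronglyMeasurable ha₂ hb₂
    (.of_forall (sq_le_mul_eta_mul_omegaW hα hε hr0))

lemma integrable_mul_conj_mul_of_memL2W_omegaW_eta (hα : 0 ≤ α) (hε : 0 < ε)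
    (hr0 : ∀ x, |x| ≤ ε → r x = 0) (hrm : Measurable r) (ha : Measurable a) (hb : Measurable b)
    (ha₂ : MemL2W (omegaW α r) a) (hb₂ : MemL2W (eta α r) b) :
    Integrable fun x => a x * conj (b x) * (r x : ℂ) :=
  integrable_mul_conj_mul_of_sq_le (by positivity) (omegaW_nonneg α r) (eta_nonneg α r)
    ha.aestronglyMeasurable hb.aestronglyMeasurable hrm.aestronglyMeasurable ha₂ hb₂
    (.of_forall fun x => mul_comm (eta α r x) _ ▸ sq_le_mul_eta_mul_omegaW hα hε hr0 x)

lemma integrable_mul_conj_mul_of_memL2W_omegaW (hα : 0 ≤ α) (hε : 0 < ε)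
    (hr0 : ∀ x, |x| ≤ ε → r x = 0) (hrm : Measurable r) (ha : Measurable a) (hb : Measurable b)
    (ha₂ : MemL2W (omegaW α r) a) (hb₂ : MemL2W (omegaW α r) b) :
    Integrable fun x => a x * conj (b x) * (r x : ℂ) :=
  integrable_mul_conj_mul_of_sq_le (by positivity) (omegaW_nonneg α r) (omegaW_nonneg α r)
    ha.aestronglyMeasurable hb.aestronglyMeasurable hrm.aestronglyMeasurable ha₂ hb₂
    (.of_forall (sq_le_mul_omegaW_mul_omegaW hα hε hr0))

lemma integrableOn_Icc_mul_conj_mul_of_memL2W_eta (hα : 0 ≤ α) (hrm : Measurable r)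
    (ha : Measurable a) (hb : Measurable b) (ha₂ : MemL2W (eta α r) a)
    (hb₂ : MemL2W (eta α r) b) {k : ℝ} (hk : 0 ≤ k) :
    IntegrableOn (fun x => a x * conj (b x) * (r x : ℂ)) (Icc (-k) k) :=
  integrable_mul_conj_mul_of_sq_le (by linarith [Real.rpow_nonneg hk α]) (eta_nonneg α r)
    (eta_nonneg α r) ha.aestronglyMeasurable hb.aestronglyMeasurable hrm.aestronglyMeasurable
    ha₂.integrableOn hb₂.integrableOn
    ((ae_restrict_iff' measurableSet_Icc).2 <| .of_forall fun _ hx =>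
      sq_le_mul_eta_mul_eta hα (abs_le.2 hx))

end Integrability

theorem truncated_integrals_converge_general (α ε : ℝ) (hα : α ∈ Set.Icc (0 : ℝ) 2) (hε : 0 < ε)
    (r : ℝ → ℝ) (hrm : Measurable r) (hr0 : ∀ x, |x| ≤ ε → r x = 0)
    (hrodd : ∀ x, r (-x) = -r x)
    (f g : ℝ → ℂ) (hf : Measurable f) (hg : Measurable g)
    (hfd : DomT α r f) (hgd : DomT α r g) :
    ∃ L : ℂ, Tendsto (fun k : ℕ =>
        ∫ x in Set.Icc (-(k : ℝ)) (k : ℝ), f x * (starRingEnd ℂ) (g x) * ((r x : ℝ) : ℂ))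
      atTop (nhds L) := by
  obtain ⟨-, hfe, hfo⟩ := hfd
  obtain ⟨-, hge, hgo⟩ := hgd
  set diag : ℝ → ℂ := fun x =>
    evenPart f x * conj (evenPart g x) * r x + oddPart f x * conj (oddPart g x) * r x
  set cross : ℝ → ℂ := fun x =>
    evenPart f x * conj (oddPart g x) * r x + oddPart f x * conj (evenPart g x) * r x
  have hsplit : ∀ x, f x * conj (g x) * r x = diag x + cross x := fun x => by
    rw [← evenPart_add_oddPart f x, ← evenPart_add_oddPart g x, map_add]
    ring
  have hdiag_odd : ∀ x, diag (-x) = -diag x := fun x => by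
    simp only [diag, evenPart_neg, oddPart_neg, hrodd, Complex.ofReal_neg, map_neg]
    ring
  have hdiag : ∀ k : ℕ, IntegrableOn diag (Icc (-k) k) := fun k =>
    (integrableOn_Icc_mul_conj_mul_of_memL2W_eta hα.1 hrm hf.evenPart hg.evenPart hfe hge
      k.cast_nonneg).add
      (integrable_mul_conj_mul_of_memL2W_omegaW hα.1 hε hr0 hrm hf.oddPart hg.oddPart hfo hgo
        |>.integrableOn)
  have hcross : Integrable cross :=
    (integrable_mul_conj_mul_of_memL2W_eta_omegaW hα.1 hε hr0 hrm hf.evenPart hg.oddPart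
      hfe hgo).add
      (integrable_mul_conj_mul_of_memL2W_omegaW_eta hα.1 hε hr0 hrm hf.oddPart hg.evenPart
        hfo hge)
  refine ⟨∫ x, cross x, ?_⟩
  have hcover : AECover volume atTop fun k : ℕ => Icc (-(k : ℝ)) k :=
    aecover_Icc (tendsto_neg_atTop_atBot.comp tendsto_natCast_atTop_atTop)
      tendsto_natCast_atTop_atTop
  refine (hcover.integral_tendsto_of_countably_generated hcross).congr fun k => ?_
  rw [setIntegral_congr_fun measurableSet_Icc fun x _ => hsplit x,
    integral_add (hdiag k) hcross.integrableOn, setIntegral_Icc_neg_eq_zero_of_odd hdiag_odd,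
    zero_add]

/-- For all `f, g ∈ dom t_α` the limit `lim_{k→∞} ∫_{−k}^{k} f·conj(g)·r dx` exists. -/
theorem truncated_integrals_converge (α ε : ℝ) (hα : α ∈ Set.Icc (0 : ℝ) 2) (hε : 0 < ε)
    (r : ℝ → ℝ) (hrm : Measurable r) (hr0 : ∀ x, |x| ≤ ε → r x = 0)
    (hrpos : ∀ᵐ x ∂(volume : Measure ℝ), ε < |x| → 0 < x * r x)
    (hrodd : ∀ x, r (-x) = -r x)
    (f g : ℝ → ℂ) (hf : Measurable f) (hg : Measurable g)
    (hfd : DomT α r f) (hgd : DomT α r g) :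
    ∃ L : ℂ, Tendsto (fun k : ℕ =>
        ∫ x in Set.Icc (-(k : ℝ)) (k : ℝ), f x * (starRingEnd ℂ) (g x) * ((r x : ℝ) : ℂ))
      atTop (nhds L) :=
  truncated_integrals_converge_general α ε hα hε r hrm hr0 hrodd f g hf hg hfd hgd
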